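/- Let α be an optimal set of three-means for P. Then either α = {1/18, 5/18, 5/6} or α = {1/6, 13/18, 17/18}, and in both cases the third quantization error is V_3 = 5/648. -/

import Mathlib

open MeasureTheory Set
open scoped ENNReal

noncomputable section

/-- The similarity map `S_j(x) = x/3^j + 1 - 1/3^(j-1)`. -/
def Smap (j : ℕ) (x : ℝ) : ℝ := x / 3 ^ j + 1 - 1 / 3 ^ (j - 1)

/-- The similarity ratio `s_j = 3^(-j)`. -/
def srat (j : ℕ) : ℝ := (3 : ℝ)⁻¹ ^ j

/-- The probability `p_j = 2^(-j)`. -/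
def prob (j : ℕ) : ℝ := (2 : ℝ)⁻¹ ^ j

/-- `J_j = S_j([0,1])`. -/
def Jset (j : ℕ) : Set ℝ := Smap j '' Set.Icc 0 1

/-- For a word `ω = ω₁⋯ω_n`, `S_ω = S_{ω₁} ∘ ⋯ ∘ S_{ω_n}`. -/
def Sword : List ℕ → ℝ → ℝ
  | [] => id
  | j :: ω => Smap j ∘ Sword ω

/-- `s_ω = s_{ω₁} ⋯ s_{ω_n}`. -/
def sword (ω : List ℕ) : ℝ := (ω.map srat).prod

/-- `p_ω = p_{ω₁} ⋯ p_{ω_n}`. -/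
def pword (ω : List ℕ) : ℝ := (ω.map prob).prod

/-- `J_ω = S_ω([0,1])`. -/
def Jword (ω : List ℕ) : Set ℝ := Sword ω '' Set.Icc 0 1

/-- `ω⁻(ω_{|ω|} + j)` : the word obtained from `ω` by increasing its last letter by `j`. -/
def wordInc (ω : List ℕ) (j : ℕ) : List ℕ := ω.dropLast ++ [ω.getLastD 1 + j]

/-- `a(ω) = S_ω(1/2)`. -/
def aw (ω : List ℕ) : ℝ := Sword ω (1 / 2)

/-- `a(ω, ∞) = S_{ω⁻(ω_{|ω|}+1)}(1/2) + s_{ω⁻(ω_{|ω|}+1)}`. -/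
def awInf (ω : List ℕ) : ℝ := Sword (wordInc ω 1) (1 / 2) + sword (wordInc ω 1)

/-- `J_{(ω,∞)} = ⋃_{j ≥ 1} J_{ω⁻(ω_{|ω|}+j)}`. -/
def JwordInf (ω : List ℕ) : Set ℝ := ⋃ j : ℕ, Jword (wordInc ω (j + 1))

/-- A (nonempty) word over the alphabet `ℕ = {1, 2, 3, …}`. -/
def IsWord (ω : List ℕ) : Prop := ω ≠ [] ∧ ∀ i ∈ ω, 1 ≤ i

/-- The self-similarity equation `P = ∑_{j=1}^∞ 2^{-j} · P ∘ S_j^{-1}`. -/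
def SelfSim (P : Measure ℝ) : Prop :=
  P = Measure.sum fun j : ℕ => ((2 : ℝ≥0∞) ^ (j + 1))⁻¹ • P.map (Smap (j + 1))

/-- The distortion error `∫ min_{a ∈ A} (x - a)² dP(x)` of a set `A` of points. -/
def err (P : Measure ℝ) (A : Set ℝ) : ℝ :=
  ∫ x, sInf ((fun a => (x - a) ^ 2) '' A) ∂P

/-- The `n`-th quantization error. -/
def quantErr (P : Measure ℝ) (n : ℕ) : ℝ :=
  sInf {v | ∃ A : Set ℝ, A.Finite ∧ A.Nonempty ∧ A.ncard ≤ n ∧ v = err P A}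

/-- An optimal set of `n`-means. -/
def IsOptimal (P : Measure ℝ) (n : ℕ) (A : Set ℝ) : Prop :=
  A.Finite ∧ A.Nonempty ∧ A.ncard ≤ n ∧ err P A = quantErr P n

/-- The Voronoi region of `a` with respect to `A`. -/
def voronoi (A : Set ℝ) (a : ℝ) : Set ℝ := {x | ∀ b ∈ A, |x - a| ≤ |x - b|}

/-- `α(ℓ) = {a(ω) : p_ω = 2^{-ℓ}} ∪ {a(ω,∞) : p_ω = 2^{-ℓ}}`. -/
def alphaSet (l : ℕ) : Set ℝ :=
  {x | ∃ ω : List ℕ, IsWord ω ∧ pword ω = (2 : ℝ)⁻¹ ^ l ∧ (x = aw ω ∨ x = awInf ω)}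

/-- The set `α_n(I)` built from `α(ℓ)` and `I ⊆ α(ℓ)`. -/
def alphaNI (l : ℕ) (I : Set ℝ) : Set ℝ :=
  (alphaSet l \ I)
    ∪ {x | ∃ ω : List ℕ, IsWord ω ∧ pword ω = (2 : ℝ)⁻¹ ^ l ∧ aw ω ∈ I ∧
        (x = aw (ω ++ [1]) ∨ x = awInf (ω ++ [1]))}
    ∪ {x | ∃ ω : List ℕ, IsWord ω ∧ pword ω = (2 : ℝ)⁻¹ ^ l ∧ awInf ω ∈ I ∧
        (x = aw (wordInc ω 1) ∨ x = awInf (wordInc ω 1))}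

/-!
Since `S_{j+1} = T ∘ S_j` for `j ≥ 1`, with `T x = x/3 + 2/3`, the self-similarity equation
collapses to `P = ½ P∘S_1⁻¹ + ½ P∘T⁻¹`: `P` is the Cantor measure, and integrals of continuous
functions split as `∫ f = (∫ f (x/3) + ∫ f (x/3 + 2/3)) / 2`. This gives the moments, and for
`u ≤ v` the two-point error `1/8 + (v - 1/2)² - 2 (v - u) W ((u + v)/2)` in terms of
`W t = ∫ (t - x)⁺`, which satisfies `6 W t = W (3t) + W (3t - 2)`. In particular the optimal
two-means are `{1/6, 5/6}`.

For three points `a ≤ b ≤ c` with `b ≤ 1/2` (the other case is the reflection `x ↦ 1 - x`),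
a crude bound on one half of the support excludes every configuration except
`a, b` serving `[0, 1/3]` and `c` serving `[2/3, 1]`. There the error is a sum of two rescaled
two-point errors: if `b ≤ 1/3` it is minimal exactly at `{1/18, 5/18, 5/6}`, while a middle
point in the gap `(1/3, 1/2]` loses, because a point left of the support barely helps the right
half: `(2t + 1) W t ≤ 2t² + 1/400`.
-/

structure IsCantorMeasure (μ : Measure ℝ) : Prop where
  measure_Icc : μ (Icc 0 1) = 1
  eq_add_map :
    μ = (2 : ℝ≥0∞)⁻¹ • μ.map (· / 3) + (2 : ℝ≥0∞)⁻¹ • μ.map (· / 3 + 2 / 3)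

lemma measurable_Smap (j : ℕ) : Measurable (Smap j) := by
  unfold Smap; fun_prop

lemma Smap_one : Smap 1 = (· / 3) := by
  funext x; simp [Smap]

lemma Smap_add_two (j : ℕ) : Smap (j + 2) = (· / 3 + 2 / 3) ∘ Smap (j + 1) := by
  funext x
  simp only [Smap, Function.comp_apply, Nat.add_sub_cancel, show j + 2 - 1 = j + 1 by omega]
  field_simp
  ring

lemma SelfSim.isCantorMeasure {P : Measure ℝ} (hsupp : P (Icc 0 1) = 1) (hself : SelfSim P) :
    IsCantorMeasure P := by
  refine ⟨hsupp, ?_⟩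
  obtain ⟨ν, hν_def⟩ : ∃ ν : ℕ → Measure ℝ,
    ν = fun j => ((2 : ℝ≥0∞) ^ (j + 1))⁻¹ • P.map (Smap (j + 1)) := ⟨_, rfl⟩
  have hg : Measurable (· / 3 + 2 / 3 : ℝ → ℝ) := by fun_prop
  have hν (j : ℕ) : ν (j + 1) = (2 : ℝ≥0∞)⁻¹ • (ν j).map (· / 3 + 2 / 3) := by
    rw [hν_def, Measure.map_smul, Measure.map_map hg (measurable_Smap _), ← Smap_add_two,
      smul_smul, ← ENNReal.mul_inv (by norm_num) (by norm_num), ← pow_succ']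
  have hP : P = Measure.sum ν := hν_def ▸ hself
  calc P = Measure.sum ν := hP
    _ = ν 0 + (2 : ℝ≥0∞)⁻¹ • (Measure.sum ν).map (· / 3 + 2 / 3) := by
      ext s hs
      rw [Measure.add_apply, Measure.smul_apply, Measure.map_apply hg hs,
        Measure.sum_apply _ hs, Measure.sum_apply _ (hg hs), smul_eq_mul,
        tsum_eq_zero_add' ENNReal.summable, ← ENNReal.tsum_mul_left]
      simp only [hν, Measure.smul_apply, Measure.map_apply hg hs, smul_eq_mul]
    _ = _ := by rw [← hP, hν_def]; simp [Smap_one]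

namespace IsCantorMeasure

variable {μ : Measure ℝ}

lemma map_one_sub (hμ : IsCantorMeasure μ) : IsCantorMeasure (μ.map (1 - ·)) := by
  have hr : Measurable (1 - · : ℝ → ℝ) := by fun_prop
  constructor
  · rw [Measure.map_apply hr measurableSet_Icc, ← hμ.measure_Icc]
    congr 1
    ext x
    simp only [mem_preimage, mem_Icc]
    constructor <;> rintro ⟨h0, h1⟩ <;> constructor <;> linarith
  · have hswap (f g : ℝ → ℝ) (hf : Measurable f) (hg : Measurable g)
        (hfg : ∀ x, 1 - g x = f (1 - x)) : (μ.map g).map (1 - ·) = (μ.map (1 - ·)).map f := by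
      rw [Measure.map_map hr hg, Measure.map_map hf hr]
      exact congrArg (Measure.map · μ) (funext hfg)
    conv_lhs => rw [hμ.eq_add_map]
    rw [Measure.map_add _ _ hr, Measure.map_smul, Measure.map_smul, add_comm,
      hswap (· / 3) (· / 3 + 2 / 3) (by fun_prop) (by fun_prop) (fun x => by ring),
      hswap (· / 3 + 2 / 3) (· / 3) (by fun_prop) (by fun_prop) (fun x => by ring)]

end IsCantorMeasure

def shortfall (μ : Measure ℝ) (t : ℝ) : ℝ := ∫ x, max (t - x) 0 ∂μ

lemma shortfall_nonneg (μ : Measure ℝ) (t : ℝ) : 0 ≤ shortfall μ t :=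
  integral_nonneg fun _ => le_max_right _ _

def err2 (μ : Measure ℝ) (u v : ℝ) : ℝ := ∫ x, min ((x - u) ^ 2) ((x - v) ^ 2) ∂μ

lemma min_sq_sub_sq_eq {u v : ℝ} (huv : u ≤ v) (x : ℝ) :
    min ((x - u) ^ 2) ((x - v) ^ 2) = (x - v) ^ 2 - 2 * (v - u) * max ((u + v) / 2 - x) 0 := by
  rcases le_total x ((u + v) / 2) with h | h
  · rw [max_eq_left (by linarith), min_eq_left (by nlinarith)]; ring
  · rw [max_eq_right (by linarith), min_eq_right (by nlinarith)]; ring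

lemma continuous_min_sq_sub (u v : ℝ) :
    Continuous fun x : ℝ => min ((x - u) ^ 2) ((x - v) ^ 2) := by
  fun_prop

lemma min_sq_sub_nonneg (u v x : ℝ) : 0 ≤ min ((x - u) ^ 2) ((x - v) ^ 2) :=
  le_min (sq_nonneg _) (sq_nonneg _)

def err3 (μ : Measure ℝ) (a b c : ℝ) : ℝ :=
  ∫ x, min (min ((x - a) ^ 2) ((x - b) ^ 2)) ((x - c) ^ 2) ∂μ

lemma continuous_min_min_sq_sub (a b c : ℝ) :
    Continuous fun x : ℝ => min (min ((x - a) ^ 2) ((x - b) ^ 2)) ((x - c) ^ 2) := by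
  fun_prop

lemma min_min_sq_sub_nonneg (a b c x : ℝ) :
    0 ≤ min (min ((x - a) ^ 2) ((x - b) ^ 2)) ((x - c) ^ 2) :=
  le_min (min_sq_sub_nonneg a b x) (sq_nonneg _)

lemma err3_map_one_sub (μ : Measure ℝ) (a b c : ℝ) :
    err3 (μ.map (1 - ·)) (1 - c) (1 - b) (1 - a) = err3 μ a b c := by
  rw [err3, err3,
    integral_map (by fun_prop) (continuous_min_min_sq_sub _ _ _).aestronglyMeasurable]
  congr 1
  funext x
  rw [show (1 - x - (1 - c)) ^ 2 = (x - c) ^ 2 by ring,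
    show (1 - x - (1 - b)) ^ 2 = (x - b) ^ 2 by ring,
    show (1 - x - (1 - a)) ^ 2 = (x - a) ^ 2 by ring]
  ac_rfl

lemma Set.exists_eq_insert_insert_singleton_of_ncard_le_three {α : Type*} {A : Set α}
    (hf : A.Finite) (hne : A.Nonempty) (hA : A.ncard ≤ 3) : ∃ p q r, A = {p, q, r} := by
  have h0 : 0 < A.ncard := (Set.ncard_pos hf).2 hne
  obtain h | h | h : A.ncard = 1 ∨ A.ncard = 2 ∨ A.ncard = 3 := by omega
  · obtain ⟨p, rfl⟩ := Set.ncard_eq_one.1 h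
    exact ⟨p, p, p, by simp⟩
  · obtain ⟨p, q, -, rfl⟩ := Set.ncard_eq_two.1 h
    exact ⟨p, p, q, by simp⟩
  · obtain ⟨p, q, r, -, -, -, rfl⟩ := Set.ncard_eq_three.1 h
    exact ⟨p, q, r, rfl⟩

lemma exists_le_le_eq_insert_insert_singleton {α : Type*} [LinearOrder α] (p q r : α) :
    ∃ a b c, a ≤ b ∧ b ≤ c ∧ ({p, q, r} : Set α) = {a, b, c} := by
  wlog hpq : p ≤ q generalizing p q r
  · simpa only [insert_comm] using this q p r (le_of_not_ge hpq)
  wlog hqr : q ≤ r generalizing p q r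
  · rcases le_total p r with hpr | hrp
    · simpa only [pair_comm] using this p r q hpr (le_of_not_ge hqr)
    · obtain ⟨a, b, c, h⟩ := this r p q hrp hpq
      refine ⟨a, b, c, ?_⟩
      rwa [insert_comm r p, pair_comm r q] at h
  exact ⟨p, q, r, hpq, hqr, rfl⟩

lemma err_insert_insert_singleton (μ : Measure ℝ) (a b c : ℝ) :
    err μ {a, b, c} = err3 μ a b c := by
  unfold err err3
  congr 1
  funext x
  rw [image_insert_eq, image_insert_eq, image_singleton,
    csInf_insert (Set.finite_singleton _ |>.insert _).bddBelow (insert_nonempty _ _), csInf_pair,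
    min_assoc]

namespace IsCantorMeasure

variable {μ : Measure ℝ} [IsProbabilityMeasure μ] (hμ : IsCantorMeasure μ)
include hμ

lemma ae_mem_Icc : ∀ᵐ x ∂μ, x ∈ Icc (0 : ℝ) 1 := by
  rw [ae_mem_iff_measure_eq measurableSet_Icc.nullMeasurableSet, hμ.measure_Icc, measure_univ]

lemma integrable {f : ℝ → ℝ} (hf : Continuous f) : Integrable f μ := by
  have hr : μ.restrict (Icc 0 1) = μ := Measure.restrict_eq_self_of_ae_mem hμ.ae_mem_Icc
  rw [← hr]
  exact hf.continuousOn.integrableOn_compact isCompact_Icc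

lemma integral_mono_of_le_on_Icc {f g : ℝ → ℝ} (hf : Continuous f) (hg : Continuous g)
    (h : ∀ x ∈ Icc (0 : ℝ) 1, f x ≤ g x) : ∫ x, f x ∂μ ≤ ∫ x, g x ∂μ :=
  integral_mono_ae (hμ.integrable hf) (hμ.integrable hg) (hμ.ae_mem_Icc.mono h)

lemma integral_congr_on_Icc {f g : ℝ → ℝ} (h : ∀ x ∈ Icc (0 : ℝ) 1, f x = g x) :
    ∫ x, f x ∂μ = ∫ x, g x ∂μ :=
  integral_congr_ae (hμ.ae_mem_Icc.mono h)

lemma le_integral_of_le_on_Icc {f : ℝ → ℝ} {c : ℝ} (hf : Continuous f)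
    (h : ∀ x ∈ Icc (0 : ℝ) 1, c ≤ f x) : c ≤ ∫ x, f x ∂μ := by
  simpa using hμ.integral_mono_of_le_on_Icc continuous_const hf h

lemma integral_eq_half_add {f : ℝ → ℝ} (hf : Continuous f) :
    ∫ x, f x ∂μ = (∫ x, f (x / 3) ∂μ + ∫ x, f (x / 3 + 2 / 3) ∂μ) / 2 := by
  have hint {g : ℝ → ℝ} (hg : Continuous g) (c : ℝ≥0∞) (hc : c ≠ ∞) :
      Integrable f (c • μ.map g) :=
    ((integrable_map_measure hf.aestronglyMeasurable hg.aemeasurable).2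
      (hμ.integrable (hf.comp hg))).smul_measure hc
  conv_lhs => rw [hμ.eq_add_map]
  rw [integral_add_measure (hint (by fun_prop) _ (by simp)) (hint (by fun_prop) _ (by simp)),
    integral_smul_measure, integral_smul_measure,
    integral_map (by fun_prop) hf.aestronglyMeasurable,
    integral_map (by fun_prop) hf.aestronglyMeasurable]
  simp only [ENNReal.toReal_inv, ENNReal.toReal_ofNat, smul_eq_mul]
  ring

lemma half_integral_left_le {f : ℝ → ℝ} (hf : Continuous f) (h0 : ∀ x, 0 ≤ f x) :
    (∫ x, f (x / 3) ∂μ) / 2 ≤ ∫ x, f x ∂μ := by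
  rw [hμ.integral_eq_half_add hf]
  linarith [integral_nonneg (μ := μ) (f := fun x => f (x / 3 + 2 / 3)) fun x => h0 _]

lemma half_integral_right_le {f : ℝ → ℝ} (hf : Continuous f) (h0 : ∀ x, 0 ≤ f x) :
    (∫ x, f (x / 3 + 2 / 3) ∂μ) / 2 ≤ ∫ x, f x ∂μ := by
  rw [hμ.integral_eq_half_add hf]
  linarith [integral_nonneg (μ := μ) (f := fun x => f (x / 3)) fun x => h0 _]

lemma integral_id : ∫ x, x ∂μ = 1 / 2 := by
  have h := hμ.integral_eq_half_add (f := fun x => x) continuous_id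
  rw [integral_add (hμ.integrable (by fun_prop)) (integrable_const _), integral_div,
    integral_const] at h
  simp only [probReal_univ, smul_eq_mul, one_mul] at h
  linarith

lemma integral_sq : ∫ x, x ^ 2 ∂μ = 3 / 8 := by
  have h := hμ.integral_eq_half_add (f := (· ^ 2)) (by fun_prop)
  have hl (x : ℝ) : (x / 3) ^ 2 = x ^ 2 / 9 := by ring
  have hr (x : ℝ) : (x / 3 + 2 / 3) ^ 2 = x ^ 2 / 9 + (4 / 9 * x + 4 / 9) := by ring
  simp only [hl, hr] at h
  rw [integral_add (hμ.integrable (by fun_prop)) (hμ.integrable (by fun_prop)),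
    integral_add (hμ.integrable (by fun_prop)) (integrable_const _), integral_div,
    integral_const_mul, integral_const, hμ.integral_id] at h
  simp only [probReal_univ, smul_eq_mul, one_mul] at h
  linarith

lemma integral_sub_sq (a : ℝ) : ∫ x, (x - a) ^ 2 ∂μ = 1 / 8 + (a - 1 / 2) ^ 2 := by
  have hexp (x : ℝ) : (x - a) ^ 2 = x ^ 2 - 2 * a * x + a ^ 2 := by ring
  simp only [hexp]
  rw [integral_add (hμ.integrable (by fun_prop)) (integrable_const _),
    integral_sub (hμ.integrable (by fun_prop)) (hμ.integrable (by fun_prop)),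
    integral_const_mul, integral_const, hμ.integral_sq, hμ.integral_id]
  simp only [probReal_univ, smul_eq_mul, one_mul]
  ring

lemma integral_div_three_sub_sq (c : ℝ) :
    ∫ x, (x / 3 - c) ^ 2 ∂μ = 1 / 72 + (c - 1 / 6) ^ 2 := by
  have h (x : ℝ) : (x / 3 - c) ^ 2 = (x - 3 * c) ^ 2 / 9 := by ring
  simp only [h, integral_div, hμ.integral_sub_sq]
  ring

lemma integral_div_three_add_sub_sq (c : ℝ) :
    ∫ x, (x / 3 + 2 / 3 - c) ^ 2 ∂μ = 1 / 72 + (c - 5 / 6) ^ 2 := by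
  have h (x : ℝ) : (x / 3 + 2 / 3 - c) ^ 2 = (x - (3 * c - 2)) ^ 2 / 9 := by ring
  simp only [h, integral_div, hμ.integral_sub_sq]
  ring

lemma le_integral_of_sub_sq_le_left {f : ℝ → ℝ} (hf : Continuous f) (h0 : ∀ x, 0 ≤ f x)
    (c : ℝ) (h : ∀ x ∈ Icc (0 : ℝ) (1 / 3), (x - c) ^ 2 ≤ f x) :
    1 / 144 + (c - 1 / 6) ^ 2 / 2 ≤ ∫ x, f x ∂μ := by
  have hle : ∫ x, (x / 3 - c) ^ 2 ∂μ ≤ ∫ x, f (x / 3) ∂μ :=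
    hμ.integral_mono_of_le_on_Icc (by fun_prop) (by fun_prop) fun x hx =>
      h _ ⟨by linarith [hx.1], by linarith [hx.2]⟩
  rw [hμ.integral_div_three_sub_sq] at hle
  linarith [hμ.half_integral_left_le hf h0]

lemma le_integral_of_sub_sq_le_right {f : ℝ → ℝ} (hf : Continuous f) (h0 : ∀ x, 0 ≤ f x)
    (c : ℝ) (h : ∀ x ∈ Icc (2 / 3 : ℝ) 1, (x - c) ^ 2 ≤ f x) :
    1 / 144 + (c - 5 / 6) ^ 2 / 2 ≤ ∫ x, f x ∂μ := by
  have hle : ∫ x, (x / 3 + 2 / 3 - c) ^ 2 ∂μ ≤ ∫ x, f (x / 3 + 2 / 3) ∂μ :=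
    hμ.integral_mono_of_le_on_Icc (by fun_prop) (by fun_prop) fun x hx =>
      h _ ⟨by linarith [hx.1], by linarith [hx.2]⟩
  rw [hμ.integral_div_three_add_sub_sq] at hle
  linarith [hμ.half_integral_right_le hf h0]

lemma shortfall_eq (t : ℝ) :
    shortfall μ t = (shortfall μ (3 * t) + shortfall μ (3 * t - 2)) / 6 := by
  have hmax (s y : ℝ) : max (s / 3 - y / 3) 0 = max (s - y) 0 / 3 := by
    rw [← sub_div, ← max_div_div_right (by norm_num : (0 : ℝ) ≤ 3), zero_div]
  rw [shortfall, hμ.integral_eq_half_add (by fun_prop)]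
  have h1 (x : ℝ) : t - x / 3 = (3 * t) / 3 - x / 3 := by ring
  have h2 (x : ℝ) : t - (x / 3 + 2 / 3) = (3 * t - 2) / 3 - x / 3 := by ring
  simp only [h1, h2, hmax, integral_div, shortfall]
  ring

lemma shortfall_of_nonpos {t : ℝ} (ht : t ≤ 0) : shortfall μ t = 0 := by
  rw [shortfall, hμ.integral_congr_on_Icc (g := fun _ => 0) fun x hx =>
    max_eq_right (by linarith [hx.1]), integral_zero]

lemma shortfall_of_one_le {t : ℝ} (ht : 1 ≤ t) : shortfall μ t = t - 1 / 2 := by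
  rw [shortfall, hμ.integral_congr_on_Icc (g := fun x => t - x) fun x hx =>
    max_eq_left (by linarith [hx.2]),
    integral_sub (integrable_const _) (hμ.integrable (by fun_prop)), integral_const, hμ.integral_id]
  simp

lemma shortfall_mono : Monotone (shortfall μ) := fun s t hst =>
  hμ.integral_mono_of_le_on_Icc (by fun_prop) (by fun_prop) fun _ _ => by gcongr

lemma shortfall_le_self {t : ℝ} (ht : 0 ≤ t) : shortfall μ t ≤ t := by
  have h := hμ.integral_mono_of_le_on_Icc (f := fun x => max (t - x) 0) (by fun_prop)
    continuous_const fun x hx => max_le (by linarith [hx.1]) ht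
  rwa [integral_const, probReal_univ, one_smul] at h

lemma shortfall_eq_div_six {t : ℝ} (ht : t ≤ 2 / 3) :
    shortfall μ t = shortfall μ (3 * t) / 6 := by
  rw [hμ.shortfall_eq, hμ.shortfall_of_nonpos (t := 3 * t - 2) (by linarith), add_zero]

lemma shortfall_of_mem_Icc {t : ℝ} (ht : t ∈ Icc (1 / 3 : ℝ) (2 / 3)) :
    shortfall μ t = t / 2 - 1 / 12 := by
  rw [hμ.shortfall_eq, hμ.shortfall_of_one_le (by linarith [ht.1]),
    hμ.shortfall_of_nonpos (by linarith [ht.2])]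
  ring

lemma shortfall_le_half {t : ℝ} (ht : t ∈ Icc (1 / 3 : ℝ) 1) : shortfall μ t ≤ t / 2 := by
  rcases le_total t (2 / 3) with h | h
  · rw [hμ.shortfall_of_mem_Icc ⟨ht.1, h⟩]; linarith
  · have hW := hμ.shortfall_mono (show 3 * t - 2 ≤ 1 by linarith [ht.2])
    rw [hμ.shortfall_of_one_le le_rfl] at hW
    rw [hμ.shortfall_eq, hμ.shortfall_of_one_le (by linarith)]
    linarith

-- Any constant below `7/2592` would do for `lt_err3_of_mem_gap`.
lemma mul_shortfall_le {t : ℝ} (ht : 0 ≤ t) :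
    (2 * t + 1) * shortfall μ t ≤ 2 * t ^ 2 + 1 / 400 := by
  have hW := shortfall_nonneg μ t
  rcases le_total 1 t with h1 | h1
  · rw [hμ.shortfall_of_one_le h1]; nlinarith
  rcases le_total (1 / 3) t with h3 | h3
  · rcases le_total t (2 / 3) with h | h
    · rw [hμ.shortfall_of_mem_Icc ⟨h3, h⟩]; nlinarith [sq_nonneg (t - 1 / 6)]
    · nlinarith [hμ.shortfall_le_half ⟨h3, h1⟩]
  rcases le_total (1 / 9) t with h9 | h9
  · rw [hμ.shortfall_eq_div_six (by linarith)]
    rcases le_total (3 * t) (2 / 3) with h | h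
    · rw [hμ.shortfall_of_mem_Icc ⟨by linarith, h⟩]; nlinarith [sq_nonneg (t - 2 / 27)]
    · nlinarith [hμ.shortfall_le_half (t := 3 * t) ⟨by linarith, by linarith⟩]
  rcases le_total (1 / 27) t with h27 | h27
  · have h8 : shortfall μ t ≤ t / 8 := by
      rw [hμ.shortfall_eq_div_six (by linarith), hμ.shortfall_eq_div_six (by linarith)]
      linarith [hμ.shortfall_le_half (t := 3 * (3 * t)) ⟨by linarith, by linarith⟩]
    nlinarith [sq_nonneg (t - 1 / 28)]
  · have h432 : shortfall μ t ≤ 1 / 432 := by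
      have h := hμ.shortfall_mono h27
      rw [hμ.shortfall_eq_div_six (t := 1 / 27) (by norm_num),
        hμ.shortfall_eq_div_six (t := 3 * (1 / 27)) (by norm_num),
        hμ.shortfall_of_mem_Icc (t := 3 * (3 * (1 / 27))) (by norm_num)] at h
      linarith
    nlinarith

lemma err2_eq {u v : ℝ} (huv : u ≤ v) :
    err2 μ u v = 1 / 8 + (v - 1 / 2) ^ 2 - 2 * (v - u) * shortfall μ ((u + v) / 2) := by
  simp only [err2, min_sq_sub_sq_eq huv]
  rw [integral_sub (hμ.integrable (by fun_prop)) (hμ.integrable (by fun_prop)),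
    integral_const_mul, hμ.integral_sub_sq, shortfall]

lemma err2_of_add_nonpos {u v : ℝ} (huv : u ≤ v) (h : u + v ≤ 0) :
    err2 μ u v = 1 / 8 + (v - 1 / 2) ^ 2 := by
  rw [hμ.err2_eq huv, hμ.shortfall_of_nonpos (by linarith), mul_zero, sub_zero]

lemma err2_eq_or_ge {u v : ℝ} (huv : u ≤ v) :
    err2 μ u v = 1 / 72 + ((u - 1 / 6) ^ 2 + (v - 5 / 6) ^ 2) / 2 ∨ 1 / 48 ≤ err2 μ u v := by
  have hc := continuous_min_sq_sub u v
  have h0 := min_sq_sub_nonneg u v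
  rcases lt_or_ge v (2 / 3) with hv | hv
  · refine .inr (le_trans ?_ (hμ.le_integral_of_sub_sq_le_right hc h0 v fun x hx =>
      le_min (by nlinarith [hx.1]) le_rfl))
    nlinarith
  rcases lt_or_ge u 0 with hu | hu
  · refine .inr (le_trans ?_ (hμ.le_integral_of_sub_sq_le_left hc h0 0 fun x hx =>
      le_min (by nlinarith [hx.1]) (by nlinarith [hx.2])))
    norm_num
  rcases lt_or_ge (1 / 3) u with hu' | hu'
  · refine .inr (le_trans ?_ (hμ.le_integral_of_sub_sq_le_left hc h0 u fun x hx =>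
      le_min le_rfl (by nlinarith [hx.2])))
    nlinarith
  rcases lt_or_ge (4 / 3) (u + v) with huv' | huv'
  · refine .inr (le_trans ?_ (hμ.le_integral_of_sub_sq_le_right hc h0 1 fun x hx =>
      le_min (by nlinarith [hx.1]) (by nlinarith [hx.2])))
    norm_num
  left
  rw [hμ.err2_eq huv, hμ.shortfall_of_mem_Icc ⟨by linarith, by linarith⟩]
  ring

lemma err2_ge_of_one_le {u v : ℝ} (hv : 1 ≤ v) : 25 / 1296 ≤ err2 μ u v := by
  have hc := continuous_min_sq_sub u v
  have h0 := min_sq_sub_nonneg u v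
  rcases lt_or_ge u 0 with hu | hu
  · refine le_trans ?_ (hμ.le_integral_of_sub_sq_le_left hc h0 0 fun x hx =>
      le_min (by nlinarith [hx.1]) (by nlinarith [hx.2]))
    norm_num
  rcases lt_or_ge (1 / 2) u with hu' | hu'
  · refine le_trans ?_ (hμ.le_integral_of_sub_sq_le_left hc h0 (1 / 2) fun x hx =>
      le_min (by nlinarith [hx.2]) (by nlinarith [hx.2]))
    norm_num
  -- `[0, 1/3]` is served by `u`, and on `[2/3, 7/9]` both points are at distance
  -- at least `min (2/3 - u) (2/9)`.
  have hleft : ∫ x, (x / 3 - u) ^ 2 ∂μ = ∫ x, min ((x / 3 - u) ^ 2) ((x / 3 - v) ^ 2) ∂μ :=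
    hμ.integral_congr_on_Icc fun x hx => (min_eq_left (by nlinarith [hx.2])).symm
  have hmid : min ((2 / 3 - u) ^ 2) (4 / 81) ≤
      ∫ x, min ((x / 3 / 3 + 2 / 3 - u) ^ 2) ((x / 3 / 3 + 2 / 3 - v) ^ 2) ∂μ :=
    hμ.le_integral_of_le_on_Icc (by fun_prop) fun x hx =>
      min_le_min (by nlinarith [hx.1]) (by nlinarith [hx.2])
  have hright := hμ.half_integral_left_le (f := fun x => min ((x / 3 + 2 / 3 - u) ^ 2)
    ((x / 3 + 2 / 3 - v) ^ 2)) (by fun_prop) fun x => min_sq_sub_nonneg u v _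
  have hsplit := hμ.integral_eq_half_add hc
  rw [hμ.integral_div_three_sub_sq] at hleft
  rw [err2]
  rcases le_total (4 / 81) ((2 / 3 - u) ^ 2) with h | h
  · rw [min_eq_right h] at hmid
    linarith [sq_nonneg (u - 1 / 6)]
  · rw [min_eq_left h] at hmid
    nlinarith [sq_nonneg (2 / 3 - u)]

lemma err2_ge_of_le_neg_half {u v : ℝ} (huv : u ≤ v) (hu : u ≤ -1 / 2) :
    1 / 8 - 1 / 200 ≤ err2 μ u v := by
  rcases le_total (u + v) 0 with h | h
  · rw [hμ.err2_of_add_nonpos huv h]; nlinarith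
  have hW := hμ.mul_shortfall_le (t := (u + v) / 2) (by linarith)
  have hWle := hμ.shortfall_le_self (t := (u + v) / 2) (by linarith)
  rw [hμ.err2_eq huv]
  nlinarith [mul_le_mul_of_nonneg_left hWle (by linarith : (0 : ℝ) ≤ -1 / 2 - u)]

-- The last two hypotheses say that `c` serves no point of `[0, 1/3]` and `a` none of `[2/3, 1]`.
lemma err3_eq_err2_add_err2 {a b c : ℝ} (hab : a ≤ b) (hbc : b ≤ c) (hab' : a + b ≤ 4 / 3)
    (hbc' : 2 / 3 ≤ b + c) :
    err3 μ a b c = (err2 μ (3 * a) (3 * b) + err2 μ (3 * b - 2) (3 * c - 2)) / 18 := by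
  have hl : ∫ x, min (min ((x / 3 - a) ^ 2) ((x / 3 - b) ^ 2)) ((x / 3 - c) ^ 2) ∂μ
      = ∫ x, min ((x - 3 * a) ^ 2) ((x - 3 * b) ^ 2) / 9 ∂μ := by
    refine hμ.integral_congr_on_Icc fun x hx => ?_
    rw [min_eq_left (min_le_of_right_le (by nlinarith [hx.2])),
      ← min_div_div_right (by norm_num)]
    congr 1 <;> ring
  have hr : ∫ x, min (min ((x / 3 + 2 / 3 - a) ^ 2) ((x / 3 + 2 / 3 - b) ^ 2))
        ((x / 3 + 2 / 3 - c) ^ 2) ∂μ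
      = ∫ x, min ((x - (3 * b - 2)) ^ 2) ((x - (3 * c - 2)) ^ 2) / 9 ∂μ := by
    refine hμ.integral_congr_on_Icc fun x hx => ?_
    rw [min_assoc, min_eq_right (min_le_of_left_le (by nlinarith [hx.1])),
      ← min_div_div_right (by norm_num)]
    congr 1 <;> ring
  rw [err3, hμ.integral_eq_half_add (continuous_min_min_sq_sub a b c), hl, hr, integral_div,
    integral_div, err2, err2]
  ring

lemma err3_optimal_left : err3 μ (1 / 18) (5 / 18) (5 / 6) = 5 / 648 := by
  rw [hμ.err3_eq_err2_add_err2 (by norm_num) (by norm_num) (by norm_num) (by norm_num),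
    hμ.err2_of_add_nonpos (u := 3 * (5 / 18) - 2) (by norm_num) (by norm_num),
    hμ.err2_eq (by norm_num), hμ.shortfall_of_mem_Icc (by norm_num)]
  norm_num

lemma err3_optimal_right : err3 μ (1 / 6) (13 / 18) (17 / 18) = 5 / 648 := by
  rw [hμ.err3_eq_err2_add_err2 (by norm_num) (by norm_num) (by norm_num) (by norm_num),
    hμ.err2_eq (u := 3 * (1 / 6)) (by norm_num), hμ.err2_eq (by norm_num),
    hμ.shortfall_of_one_le (t := (3 * (1 / 6) + 3 * (13 / 18)) / 2) (by norm_num),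
    hμ.shortfall_of_mem_Icc (by norm_num)]
  norm_num

lemma lt_err3_of_mem_gap {a b c : ℝ} (hab : a ≤ b) (hbc : b ≤ c) (ha : a ≤ 1 / 3)
    (hb : b ∈ Ioc (1 / 3 : ℝ) (1 / 2)) (hc : 2 / 3 ≤ c) : 5 / 648 < err3 μ a b c := by
  rw [hμ.err3_eq_err2_add_err2 hab hbc (by linarith [hb.2]) (by linarith [hb.1])]
  linarith [hμ.err2_ge_of_one_le (u := 3 * a) (v := 3 * b) (by linarith [hb.1]),
    hμ.err2_ge_of_le_neg_half (u := 3 * b - 2) (v := 3 * c - 2) (by linarith) (by linarith [hb.2])]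

lemma eq_of_err3_le {a b c : ℝ} (hab : a ≤ b) (hbc : b ≤ c) (hb : b ≤ 1 / 2)
    (h : err3 μ a b c ≤ 5 / 648) : a = 1 / 18 ∧ b = 5 / 18 ∧ c = 5 / 6 := by
  have hf := continuous_min_min_sq_sub a b c
  have h0 := min_min_sq_sub_nonneg a b c
  have h48 {d : ℝ} (hd : 1 / 48 ≤ d) (hle : d ≤ err3 μ a b c) : False := by linarith
  rcases lt_or_ge c (2 / 3) with hc | hc
  · exact (h48 (by nlinarith) (hμ.le_integral_of_sub_sq_le_right hf h0 c fun x hx =>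
      le_min (le_min (by nlinarith [hx.1]) (by nlinarith [hx.1])) le_rfl)).elim
  rcases lt_or_ge (1 / 3) a with ha | ha
  · exact (h48 (by nlinarith) (hμ.le_integral_of_sub_sq_le_left hf h0 a fun x hx =>
      le_min (le_min le_rfl (by nlinarith [hx.2])) (by nlinarith [hx.2]))).elim
  rcases lt_or_ge b 0 with hb0 | hb0
  · exact (h48 (by norm_num) (hμ.le_integral_of_sub_sq_le_left hf h0 0 fun x hx =>
      le_min (le_min (by nlinarith [hx.1]) (by nlinarith [hx.1])) (by nlinarith [hx.2]))).elim
  rcases le_or_gt b (1 / 3) with hb3 | hb3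
  swap
  · exact absurd h (not_le.2 (hμ.lt_err3_of_mem_gap hab hbc ha ⟨hb3, hb⟩ hc))
  rcases lt_or_ge (4 / 3) (b + c) with hbc' | hbc'
  · exact (h48 (by norm_num) (hμ.le_integral_of_sub_sq_le_right hf h0 1 fun x hx =>
      le_min (le_min (by nlinarith [hx.1]) (by nlinarith [hx.1])) (by nlinarith [hx.2]))).elim
  rw [hμ.err3_eq_err2_add_err2 hab hbc (by linarith) (by linarith),
    hμ.err2_of_add_nonpos (u := 3 * b - 2) (by linarith) (by linarith)] at h
  rcases hμ.err2_eq_or_ge (u := 3 * a) (v := 3 * b) (by linarith) with h2 | h2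
  · rw [h2] at h
    have := sq_nonneg (3 * a - 1 / 6)
    have := sq_nonneg (3 * b - 5 / 6)
    have := sq_nonneg (3 * c - 2 - 1 / 2)
    have ha' : (3 * a - 1 / 6) ^ 2 = 0 := by linarith
    have hb' : (3 * b - 5 / 6) ^ 2 = 0 := by linarith
    have hc' : (3 * c - 2 - 1 / 2) ^ 2 = 0 := by linarith
    simp only [pow_eq_zero_iff two_ne_zero, sub_eq_zero] at ha' hb' hc'
    refine ⟨by linarith, by linarith, by linarith⟩
  · nlinarith

lemma eq_of_err_le {A : Set ℝ} (hf : A.Finite) (hne : A.Nonempty) (hA : A.ncard ≤ 3)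
    (h : err μ A ≤ 5 / 648) : A = {1 / 18, 5 / 18, 5 / 6} ∨ A = {1 / 6, 13 / 18, 17 / 18} := by
  obtain ⟨p, q, r, rfl⟩ := Set.exists_eq_insert_insert_singleton_of_ncard_le_three hf hne hA
  obtain ⟨a, b, c, hab, hbc, habc⟩ := exists_le_le_eq_insert_insert_singleton p q r
  rw [habc] at h ⊢
  rw [err_insert_insert_singleton] at h
  rcases le_total b (1 / 2) with hb | hb
  · obtain ⟨rfl, rfl, rfl⟩ := hμ.eq_of_err3_le hab hbc hb h
    exact .inl rfl
  · have : IsProbabilityMeasure (μ.map (1 - ·)) :=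
      Measure.isProbabilityMeasure_map (by fun_prop)
    rw [← err3_map_one_sub] at h
    obtain ⟨hc, hb, ha⟩ := hμ.map_one_sub.eq_of_err3_le (by linarith) (by linarith) (by linarith) h
    right
    rw [show a = 1 / 6 by linarith, show b = 13 / 18 by linarith, show c = 17 / 18 by linarith]

lemma quantErr_three : quantErr μ 3 = 5 / 648 := by
  have hleft : err μ {1 / 18, 5 / 18, 5 / 6} = 5 / 648 := by
    rw [err_insert_insert_singleton, hμ.err3_optimal_left]
  refine IsLeast.csInf_eq ⟨⟨_, toFinite _, insert_nonempty _ _, ?_, hleft.symm⟩, ?_⟩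
  · exact (ncard_eq_three.2 ⟨_, _, _, by norm_num, by norm_num, by norm_num, rfl⟩).le
  rintro _ ⟨A, hf, hne, hA, rfl⟩
  by_contra! hlt
  rcases hμ.eq_of_err_le hf hne hA hlt.le with rfl | rfl
  · linarith
  · rw [err_insert_insert_singleton, hμ.err3_optimal_right] at hlt
    linarith

end IsCantorMeasure

theorem optimal_three_means (P : Measure ℝ) [IsProbabilityMeasure P]
    (hsupp : P (Set.Icc 0 1) = 1) (hself : SelfSim P) (α : Set ℝ) (hα : IsOptimal P 3 α) :
    (α = {1 / 18, 5 / 18, 5 / 6} ∨ α = {1 / 6, 13 / 18, 17 / 18}) ∧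
    quantErr P 3 = 5 / 648 := by
  have hP := SelfSim.isCantorMeasure hsupp hself
  obtain ⟨hf, hne, hcard, hopt⟩ := hα
  exact ⟨hP.eq_of_err_le hf hne hcard (by rw [hopt, hP.quantErr_three]), hP.quantErr_three⟩

end
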